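/- Let F2 be a finite subset of ℤ² with non-zero row sums r_1 ≥ r_2 ≥ … ≥ r_m (in rows 1,…,m, all other row sums zero) and non-zero column sums c_1 ≥ c_2 ≥ … ≥ c_n (in columns 1,…,n, all other column sums zero). Put a_j = #{i : r_i ≥ j} for 1 ≤ j ≤ n and b_i = #{j : c_j ≥ i} for 1 ≤ i ≤ m. Define α_0 = min{α(F2, F) : F finite ⊆ ℤ², F uniquely determined by its line sums}. Let F1 be a finite subset of ℤ² uniquely determined by its line sums, with row sums u_1 ≥ u_2 ≥ … (in rows 1, 2, …, zero elsewhere) and column sums v_1 ≥ v_2 ≥ … (in columns 1, 2, …, zero elsewhere). Then the following are equivalent: (i) α(F2, F1) = α_0; (ii) for all j ≥ 1, min(a_j, c_j) ≤ v_j ≤ max(a_j, c_j) if 1 ≤ j ≤ n, and v_j = 0 if j > n; (iii) for all i ≥ 1, min(b_i, r_i) ≤ u_i ≤ max(b_i, r_i) if 1 ≤ i ≤ m, and u_i = 0 if i > m. -/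

import Mathlib

open Finset

/-- The row sum `r_i(F)`: the number of elements of `F` in row `i`. -/
def rowSum (F : Finset (ℤ × ℤ)) (i : ℤ) : ℤ :=
  ((F.filter fun p => p.1 = i).card : ℤ)

/-- The column sum `c_j(F)`: the number of elements of `F` in column `j`. -/
def colSum (F : Finset (ℤ × ℤ)) (j : ℤ) : ℤ :=
  ((F.filter fun p => p.2 = j).card : ℤ)

/-- `F` is uniquely determined by its line sums. -/
def uniquelyDetermined (F : Finset (ℤ × ℤ)) : Prop :=
  ∀ F' : Finset (ℤ × ℤ),
    (∀ i, rowSum F' i = rowSum F i) → (∀ j, colSum F' j = colSum F j) → F' = F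

/-- `Σ_j |c_j(F1) − c_j(F2)| + Σ_i |r_i(F1) − r_i(F2)|`; the sums over all of `ℤ`
reduce to the finite index sets below, since all other terms vanish. -/
def lineDiff (F1 F2 : Finset (ℤ × ℤ)) : ℤ :=
  (∑ j ∈ (F1 ∪ F2).image Prod.snd, |colSum F1 j - colSum F2 j|)
    + ∑ i ∈ (F1 ∪ F2).image Prod.fst, |rowSum F1 i - rowSum F2 i|

/-- `α(F1, F2)`. -/
noncomputable def alpha (F1 F2 : Finset (ℤ × ℤ)) : ℝ :=
  (lineDiff F1 F2 : ℝ) / 2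

/-!
Push every column of a set `F` up into rows `1, 2, …` to get `colDiagram F`, and every row to
the left into columns `1, 2, …` to get `rowDiagram F`; then
`2 α(G, F) = |colDiagram G ∆ colDiagram F| + |rowDiagram G ∆ rowDiagram F|`.
When the line sums of `G` are sorted, `C = colDiagram G` and `R = rowDiagram G` are staircases.
For a uniquely determined, hence switch-free, `F`, sorting the columns of `colDiagram F` and the
rows of `rowDiagram F` only decreases these distances and yields one and the same staircase `S`,
so `2 α(G, F) ≥ |S ∆ C| + |S ∆ R| ≥ |C ∆ R|`. The staircase `C ∩ R` is uniquely determined and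
attains this bound, so `2 α₀ = |C ∆ R|`, and a staircase `F₁` attains it exactly when
`C ∩ R ⊆ F₁ ⊆ C ∪ R`. Read column by column this is (ii), read row by row it is (iii).
-/

open scoped symmDiff

namespace Finset

variable {α : Type*} [DecidableEq α]

lemma card_symmDiff (s t : Finset α) : #(s ∆ t) = #(s \ t) + #(t \ s) :=
  card_union_of_disjoint disjoint_sdiff_sdiff

lemma filter_symmDiff (p : α → Prop) [DecidablePred p] (s t : Finset α) :
    (s ∆ t).filter p = s.filter p ∆ t.filter p := by
  ext x; simp only [mem_filter, mem_symmDiff]; tauto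

lemma abs_card_sub_card_le_card_symmDiff (s t : Finset α) :
    |(#s : ℤ) - #t| ≤ #(s ∆ t) := by
  have hs := card_sdiff_add_card_inter s t
  have ht := card_sdiff_add_card_inter t s
  rw [inter_comm] at ht
  rw [card_symmDiff, abs_le]
  omega

lemma card_symmDiff_of_subset {s t : Finset α} (h : s ⊆ t) : (#(s ∆ t) : ℤ) = #t - #s := by
  rw [card_symmDiff, sdiff_eq_empty_iff_subset.2 h, card_sdiff_of_subset h]
  simp [Nat.cast_sub (card_le_card h)]

lemma card_symmDiff_eq_abs {s t : Finset α} (h : s ⊆ t ∨ t ⊆ s) :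
    (#(s ∆ t) : ℤ) = |(#s : ℤ) - #t| := by
  rcases h with h | h
  · rw [card_symmDiff_of_subset h, abs_sub_comm, abs_of_nonneg (by simpa using card_le_card h)]
  · rw [symmDiff_comm, card_symmDiff_of_subset h, abs_of_nonneg (by simpa using card_le_card h)]

lemma card_symmDiff_add_card_symmDiff (S A C : Finset α) :
    #(S ∆ A) + #(S ∆ C) = #(A ∆ C) + 2 * (#((A ∩ C) \ S) + #(S \ (A ∪ C))) := by
  have count : ∀ X ⊆ S ∪ A ∪ C, #X = ∑ p ∈ S ∪ A ∪ C, if p ∈ X then 1 else 0 := by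
    intro X hX
    rw [sum_boole, Nat.cast_id, filter_mem_eq_inter, inter_eq_right.2 hX]
  rw [count (S ∆ A) (by intro p; simp [mem_symmDiff]; tauto),
    count (S ∆ C) (by intro p; simp [mem_symmDiff]; tauto),
    count (A ∆ C) (by intro p; simp [mem_symmDiff]; tauto),
    count ((A ∩ C) \ S) (by intro p; simp; tauto),
    count (S \ (A ∪ C)) (by intro p; simp; tauto),
    ← sum_add_distrib, ← sum_add_distrib, mul_sum, ← sum_add_distrib]
  refine sum_congr rfl fun p _ => ?_
  by_cases hS : p ∈ S <;> by_cases hA : p ∈ A <;> by_cases hC : p ∈ C <;>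
    simp [mem_symmDiff, hS, hA, hC]

lemma card_symmDiff_triangle (S A C : Finset α) : #(A ∆ C) ≤ #(S ∆ A) + #(S ∆ C) := by
  have := card_symmDiff_add_card_symmDiff S A C; omega

lemma card_symmDiff_add_card_symmDiff_eq_iff (S A C : Finset α) :
    #(S ∆ A) + #(S ∆ C) = #(A ∆ C) ↔ A ∩ C ⊆ S ∧ S ⊆ A ∪ C := by
  rw [card_symmDiff_add_card_symmDiff, ← sdiff_eq_empty_iff_subset, ← sdiff_eq_empty_iff_subset,
    ← card_eq_zero, ← card_eq_zero]
  omega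

end Finset

def transpose (F : Finset (ℤ × ℤ)) : Finset (ℤ × ℤ) := F.image Prod.swap

@[simp] lemma mem_transpose {F : Finset (ℤ × ℤ)} {p : ℤ × ℤ} : p ∈ transpose F ↔ p.swap ∈ F := by
  constructor
  · rintro h
    obtain ⟨q, hq, rfl⟩ := mem_image.1 h
    simpa using hq
  · intro h
    exact mem_image.2 ⟨p.swap, h, p.swap_swap⟩

@[simp] lemma transpose_transpose (F : Finset (ℤ × ℤ)) : transpose (transpose F) = F := by
  ext p; simp

@[simp] lemma card_transpose (F : Finset (ℤ × ℤ)) : #(transpose F) = #F :=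
  card_image_of_injective _ Prod.swap_injective

lemma transpose_symmDiff (X Y : Finset (ℤ × ℤ)) :
    transpose (X ∆ Y) = transpose X ∆ transpose Y :=
  image_symmDiff _ _ Prod.swap_injective

@[simp] lemma transpose_subset_transpose {X Y : Finset (ℤ × ℤ)} :
    transpose X ⊆ transpose Y ↔ X ⊆ Y :=
  image_subset_image_iff Prod.swap_injective

lemma transpose_inter (X Y : Finset (ℤ × ℤ)) :
    transpose (X ∩ Y) = transpose X ∩ transpose Y := by
  ext p; simp

lemma transpose_union (X Y : Finset (ℤ × ℤ)) :
    transpose (X ∪ Y) = transpose X ∪ transpose Y := by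
  ext p; simp

@[simp] lemma image_fst_transpose (F : Finset (ℤ × ℤ)) :
    (transpose F).image Prod.fst = F.image Prod.snd := by
  rw [transpose, image_image]; rfl

@[simp] lemma rowSum_transpose (F : Finset (ℤ × ℤ)) (i : ℤ) :
    rowSum (transpose F) i = colSum F i := by
  rw [rowSum, colSum, transpose, filter_image, card_image_of_injective _ Prod.swap_injective]
  rfl

@[simp] lemma colSum_transpose (F : Finset (ℤ × ℤ)) (j : ℤ) :
    colSum (transpose F) j = rowSum F j := by
  rw [← rowSum_transpose, transpose_transpose]

lemma rowSum_nonneg (F : Finset (ℤ × ℤ)) (i : ℤ) : 0 ≤ rowSum F i := Int.natCast_nonneg _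

lemma colSum_nonneg (F : Finset (ℤ × ℤ)) (j : ℤ) : 0 ≤ colSum F j := Int.natCast_nonneg _

lemma rowSum_pos_iff {F : Finset (ℤ × ℤ)} {i : ℤ} : 0 < rowSum F i ↔ ∃ j, (i, j) ∈ F := by
  simp only [rowSum, Nat.cast_pos, card_pos, Finset.Nonempty, mem_filter]
  exact ⟨fun ⟨p, hp, hpi⟩ => ⟨p.2, hpi ▸ hp⟩, fun ⟨j, hj⟩ => ⟨(i, j), hj, rfl⟩⟩

lemma colSum_pos_iff {F : Finset (ℤ × ℤ)} {j : ℤ} : 0 < colSum F j ↔ ∃ i, (i, j) ∈ F := by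
  simp [← rowSum_transpose, rowSum_pos_iff]

lemma rowSum_insert {F : Finset (ℤ × ℤ)} {x : ℤ × ℤ} (hx : x ∉ F) (i : ℤ) :
    rowSum (insert x F) i = rowSum F i + if x.1 = i then 1 else 0 := by
  rw [rowSum, rowSum, filter_insert]
  split_ifs <;> simp [card_insert_of_notMem (mt (fun h => (mem_filter.1 h).1) hx)]

lemma colSum_insert {F : Finset (ℤ × ℤ)} {x : ℤ × ℤ} (hx : x ∉ F) (j : ℤ) :
    colSum (insert x F) j = colSum F j + if x.2 = j then 1 else 0 := by
  rw [colSum, colSum, filter_insert]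
  split_ifs <;> simp [card_insert_of_notMem (mt (fun h => (mem_filter.1 h).1) hx)]

lemma mem_image_fst_iff {F : Finset (ℤ × ℤ)} {i : ℤ} : i ∈ F.image Prod.fst ↔ 0 < rowSum F i := by
  simp [rowSum_pos_iff]

lemma mem_image_snd_iff {F : Finset (ℤ × ℤ)} {j : ℤ} : j ∈ F.image Prod.snd ↔ 0 < colSum F j := by
  simp [colSum_pos_iff]

lemma sum_add_eq_of_lineSums_eq {F F' : Finset (ℤ × ℤ)} (hr : ∀ i, rowSum F' i = rowSum F i)
    (hc : ∀ j, colSum F' j = colSum F j) (g h : ℤ → ℤ) :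
    ∑ p ∈ F', (g p.1 + h p.2) = ∑ p ∈ F, (g p.1 + h p.2) := by
  have hfst : F'.image Prod.fst = F.image Prod.fst := by
    ext i; rw [mem_image_fst_iff, mem_image_fst_iff, hr]
  have hsnd : F'.image Prod.snd = F.image Prod.snd := by
    ext j; rw [mem_image_snd_iff, mem_image_snd_iff, hc]
  simp only [sum_add_distrib, sum_comp g Prod.fst, sum_comp h Prod.snd, hfst, hsnd]
  congr 1 <;> refine sum_congr rfl fun i _ => ?_
  · simpa [rowSum] using congrArg (· • g i) (hr i)
  · simpa [colSum] using congrArg (· • h i) (hc i)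

/-- Among the sets `F'` with the line sums of `F`, the weight `∑_{p ∈ F'} (g p.1 + h p.2)` is
constant, yet strictly maximised by `F`. -/
lemma uniquelyDetermined_of_weight {F : Finset (ℤ × ℤ)} (g h : ℤ → ℤ)
    (hin : ∀ p ∈ F, 0 < g p.1 + h p.2)
    (hout : ∀ p ∉ F, 0 < rowSum F p.1 → 0 < colSum F p.2 → g p.1 + h p.2 < 0) :
    uniquelyDetermined F := by
  intro F' hr hc
  by_contra hne
  have hout' : ∀ p ∈ F', p ∉ F → g p.1 + h p.2 < 0 := fun p hpF' hpF =>
    hout p hpF (hr p.1 ▸ rowSum_pos_iff.2 ⟨p.2, hpF'⟩) (hc p.2 ▸ colSum_pos_iff.2 ⟨p.1, hpF'⟩)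
  have hlt : ∑ p ∈ F ∪ F', (if p ∈ F' then g p.1 + h p.2 else 0)
      < ∑ p ∈ F ∪ F', (if p ∈ F then g p.1 + h p.2 else 0) := by
    apply sum_lt_sum
    · intro p _
      split_ifs with hpF' hpF hpF
      exacts [le_rfl, (hout' p hpF' hpF).le, (hin p hpF).le, le_rfl]
    · obtain ⟨p, hp⟩ := symmDiff_nonempty.2 (Ne.symm hne)
      refine ⟨p, symmDiff_subset_union hp, ?_⟩
      rcases mem_symmDiff.1 hp with ⟨hpF, hpF'⟩ | ⟨hpF', hpF⟩
      · simpa [hpF, hpF'] using hin p hpF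
      · simpa [hpF, hpF'] using hout' p hpF' hpF
  rw [sum_ite_mem, sum_ite_mem, union_inter_cancel_right, union_inter_cancel_left] at hlt
  exact hlt.ne (sum_add_eq_of_lineSums_eq hr hc g h)

def SwitchFree (F : Finset (ℤ × ℤ)) : Prop :=
  ∀ p ∈ F, ∀ q ∈ F, (p.1, q.2) ∈ F ∨ (q.1, p.2) ∈ F

/-- Moving the two cells of a switch to the opposite corners preserves all line sums. -/
lemma uniquelyDetermined.switchFree {F : Finset (ℤ × ℤ)} (hF : uniquelyDetermined F) :
    SwitchFree F := by
  rintro ⟨i, j⟩ hp ⟨i', j'⟩ hq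
  by_contra! h
  obtain ⟨h1, h2⟩ : (i, j') ∉ F ∧ (i', j) ∉ F := h
  have hi : i ≠ i' := by rintro rfl; exact h1 hq
  set G := (F.erase (i, j)).erase (i', j')
  have hqG : (i', j') ∉ G := notMem_erase _ _
  have hpG : (i, j) ∉ insert (i', j') G := by simp [G, hi]
  have h2G : (i', j) ∉ G := fun h => h2 (mem_of_mem_erase (mem_of_mem_erase h))
  have h1G : (i, j') ∉ insert (i', j) G := by
    simp only [mem_insert, Prod.mk.injEq, hi, false_and, false_or]
    exact fun h => h1 (mem_of_mem_erase (mem_of_mem_erase h))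
  have hFG : F = insert (i, j) (insert (i', j') G) := by
    rw [insert_erase (mem_erase.2 ⟨by simp [hi.symm], hq⟩), insert_erase hp]
  refine h1 (hF (insert (i, j') (insert (i', j) G)) (fun k => ?_) (fun k => ?_) ▸
    mem_insert_self _ _)
  · rw [hFG, rowSum_insert h1G, rowSum_insert h2G, rowSum_insert hpG, rowSum_insert hqG]
  · rw [hFG, colSum_insert h1G, colSum_insert h2G, colSum_insert hpG, colSum_insert hqG]
    ring

lemma SwitchFree.transpose {F : Finset (ℤ × ℤ)} (hF : SwitchFree F) :
    SwitchFree (transpose F) := by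
  intro p hp q hq
  simpa [or_comm] using hF _ (mem_transpose.1 hp) _ (mem_transpose.1 hq)

/-- The columns of a switch-free set are nested. -/
lemma SwitchFree.mem_of_colSum_le {F : Finset (ℤ × ℤ)} (hF : SwitchFree F) {i j j' : ℤ}
    (hc : colSum F j ≤ colSum F j') (h : (i, j) ∈ F) : (i, j') ∈ F := by
  by_contra h'
  simp only [colSum] at hc
  set col' : Finset (ℤ × ℤ) := F.filter fun p => p.2 = j'
  have hmaps : Set.MapsTo (fun p : ℤ × ℤ => (p.1, j)) col'
      ((F.filter fun p => p.2 = j).erase (i, j)) := by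
    rintro ⟨i', _⟩ hq
    rw [mem_coe, mem_filter] at hq
    obtain ⟨hq, rfl⟩ := hq
    have hi' : i' ≠ i := by rintro rfl; exact h' hq
    simpa [hi'] using (hF _ h _ hq).resolve_left h'
  have hinj : Set.InjOn (fun p : ℤ × ℤ => (p.1, j)) col' := by
    rintro ⟨_, _⟩ hp ⟨_, _⟩ hq hpq
    simp_all [col']
  have := card_le_card_of_injOn _ hmaps hinj
  have hmem : (i, j) ∈ F.filter fun p => p.2 = j := mem_filter.2 ⟨h, rfl⟩
  rw [card_erase_of_mem hmem] at this
  have := card_pos.2 ⟨_, hmem⟩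
  omega

lemma SwitchFree.mem_of_rowSum_le {F : Finset (ℤ × ℤ)} (hF : SwitchFree F) {i i' j : ℤ}
    (hr : rowSum F i ≤ rowSum F i') (h : (i, j) ∈ F) : (i', j) ∈ F := by
  simpa using hF.transpose.mem_of_colSum_le (by simpa using hr) (mem_transpose.2 h)

/-- The shortest of these (at least `k`) columns has at least `t` cells, and by nestedness the
row through each of them meets all these columns. -/
lemma SwitchFree.le_card_filter_rowSum {F : Finset (ℤ × ℤ)} (hF : SwitchFree F) {t k : ℤ}
    (hk : 1 ≤ k) (h : k ≤ #{j ∈ F.image Prod.snd | t ≤ colSum F j}) :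
    t ≤ #{i ∈ F.image Prod.fst | k ≤ rowSum F i} := by
  set J := {j ∈ F.image Prod.snd | t ≤ colSum F j}
  obtain ⟨j₀, hj₀, hmin⟩ := J.exists_min_image (colSum F) (card_pos.1 (by omega))
  have hrow : ∀ i, (i, j₀) ∈ F → k ≤ rowSum F i := by
    intro i hi
    refine h.trans (Nat.cast_le.2 (card_le_card_of_injOn (fun j => (i, j)) ?_ ?_))
    · intro j hj
      exact mem_filter.2 ⟨hF.mem_of_colSum_le (hmin j hj) hi, rfl⟩
    · intro _ _ _ _ h
      exact (Prod.mk.inj h).2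
  calc t ≤ colSum F j₀ := (mem_filter.1 hj₀).2
    _ ≤ _ := by
      refine Nat.cast_le.2 (card_le_card_of_injOn Prod.fst ?_ ?_)
      · rintro ⟨i, _⟩ hp
        rw [mem_coe, mem_filter] at hp
        obtain ⟨hp, rfl⟩ := hp
        exact mem_filter.2 ⟨mem_image_of_mem _ hp, hrow i hp⟩
      · rintro ⟨_, _⟩ hp ⟨_, _⟩ hq rfl
        simp_all

noncomputable def rowDiagram (F : Finset (ℤ × ℤ)) : Finset (ℤ × ℤ) :=
  (F.image Prod.fst).biUnion fun i => {i} ×ˢ Icc 1 (rowSum F i)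

noncomputable def colDiagram (F : Finset (ℤ × ℤ)) : Finset (ℤ × ℤ) :=
  transpose (rowDiagram (transpose F))

@[simp] lemma mem_rowDiagram {F : Finset (ℤ × ℤ)} {p : ℤ × ℤ} :
    p ∈ rowDiagram F ↔ 1 ≤ p.2 ∧ p.2 ≤ rowSum F p.1 := by
  simp only [rowDiagram, mem_biUnion, mem_product, mem_singleton, mem_Icc, mem_image_fst_iff]
  constructor
  · rintro ⟨i, -, rfl, h⟩
    exact h
  · rintro h
    exact ⟨p.1, h.1.trans_lt' zero_lt_one |>.trans_le h.2, rfl, h⟩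

@[simp] lemma mem_colDiagram {F : Finset (ℤ × ℤ)} {p : ℤ × ℤ} :
    p ∈ colDiagram F ↔ 1 ≤ p.1 ∧ p.1 ≤ colSum F p.2 := by
  simp [colDiagram]

lemma rowDiagram_transpose (F : Finset (ℤ × ℤ)) :
    rowDiagram (transpose F) = transpose (colDiagram F) := by
  simp [colDiagram]

lemma colDiagram_transpose (F : Finset (ℤ × ℤ)) :
    colDiagram (transpose F) = transpose (rowDiagram F) := by
  simp [colDiagram]

lemma filter_rowDiagram (F : Finset (ℤ × ℤ)) (i : ℤ) :
    (rowDiagram F).filter (fun p => p.1 = i) = {i} ×ˢ Icc 1 (rowSum F i) := by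
  ext ⟨i', t⟩
  simp only [mem_filter, mem_rowDiagram, mem_product, mem_singleton, mem_Icc]
  constructor
  · rintro ⟨h, rfl⟩
    exact ⟨rfl, h⟩
  · rintro ⟨rfl, h⟩
    exact ⟨h, rfl⟩

lemma rowSum_rowDiagram (F : Finset (ℤ × ℤ)) (i : ℤ) : rowSum (rowDiagram F) i = rowSum F i := by
  rw [rowSum, filter_rowDiagram, card_product, card_singleton, one_mul, Int.card_Icc,
    add_sub_cancel_right, Int.toNat_of_nonneg (rowSum_nonneg F i)]

lemma colSum_colDiagram (F : Finset (ℤ × ℤ)) (j : ℤ) : colSum (colDiagram F) j = colSum F j := by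
  simpa [colDiagram] using rowSum_rowDiagram (transpose F) j

lemma card_symmDiff_rowDiagram (X Y : Finset (ℤ × ℤ)) :
    (#(rowDiagram X ∆ rowDiagram Y) : ℤ)
      = ∑ i ∈ (X ∪ Y).image Prod.fst, |rowSum X i - rowSum Y i| := by
  have hmaps : ∀ p ∈ rowDiagram X ∆ rowDiagram Y, p.1 ∈ (X ∪ Y).image Prod.fst := by
    intro p hp
    simp only [mem_symmDiff, mem_rowDiagram] at hp
    simp only [image_union, mem_union, mem_image_fst_iff]
    omega
  rw [card_eq_sum_card_fiberwise hmaps, Nat.cast_sum]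
  refine sum_congr rfl fun i _ => ?_
  rw [filter_symmDiff, card_symmDiff_eq_abs]
  · exact congrArg abs (congrArg₂ _ (rowSum_rowDiagram X i) (rowSum_rowDiagram Y i))
  · rw [filter_rowDiagram, filter_rowDiagram]
    rcases le_total (rowSum X i) (rowSum Y i) with h | h
    · exact .inl (product_subset_product_right (Icc_subset_Icc_right h))
    · exact .inr (product_subset_product_right (Icc_subset_Icc_right h))

lemma card_symmDiff_rowDiagram_le (X Y : Finset (ℤ × ℤ)) :
    #(rowDiagram X ∆ rowDiagram Y) ≤ #(X ∆ Y) := by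
  have hmaps : ∀ p ∈ X ∆ Y, p.1 ∈ (X ∪ Y).image Prod.fst :=
    fun p hp => mem_image_of_mem _ (symmDiff_subset_union hp)
  rw [← Nat.cast_le (α := ℤ), card_symmDiff_rowDiagram, card_eq_sum_card_fiberwise hmaps,
    Nat.cast_sum]
  refine sum_le_sum fun i _ => ?_
  rw [filter_symmDiff]
  exact abs_card_sub_card_le_card_symmDiff _ _

lemma card_symmDiff_colDiagram (X Y : Finset (ℤ × ℤ)) :
    (#(colDiagram X ∆ colDiagram Y) : ℤ)
      = ∑ j ∈ (X ∪ Y).image Prod.snd, |colSum X j - colSum Y j| := by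
  simpa [colDiagram, ← transpose_symmDiff, ← transpose_union] using
    card_symmDiff_rowDiagram (transpose X) (transpose Y)

lemma card_symmDiff_colDiagram_le (X Y : Finset (ℤ × ℤ)) :
    #(colDiagram X ∆ colDiagram Y) ≤ #(X ∆ Y) := by
  simpa [colDiagram, ← transpose_symmDiff] using
    card_symmDiff_rowDiagram_le (transpose X) (transpose Y)

lemma lineDiff_eq (X Y : Finset (ℤ × ℤ)) :
    lineDiff X Y = #(colDiagram X ∆ colDiagram Y) + #(rowDiagram X ∆ rowDiagram Y) := by
  rw [lineDiff, card_symmDiff_colDiagram, card_symmDiff_rowDiagram]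

lemma colSum_rowDiagram {F : Finset (ℤ × ℤ)} {t : ℤ} (ht : 1 ≤ t) {s : Finset ℤ}
    (hs : ∀ i, 0 < rowSum F i → i ∈ s) : colSum (rowDiagram F) t = #{i ∈ s | t ≤ rowSum F i} := by
  rw [colSum, Nat.cast_inj]
  refine card_nbij' Prod.fst (fun i => (i, t)) ?_ ?_ ?_ ?_
  · rintro ⟨i, t'⟩ hp
    simp only [mem_coe, mem_filter, mem_rowDiagram] at hp
    obtain ⟨⟨-, h⟩, rfl⟩ := hp
    simpa using ⟨hs i (by omega), h⟩
  · intro i hi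
    rw [mem_coe, mem_filter] at hi
    simpa using ⟨ht, hi.2⟩
  · rintro ⟨i, t'⟩ hp
    simp only [mem_coe, mem_filter] at hp
    simp [hp.2]
  · intro i _
    rfl

lemma rowSum_colDiagram {F : Finset (ℤ × ℤ)} {t : ℤ} (ht : 1 ≤ t) {s : Finset ℤ}
    (hs : ∀ j, 0 < colSum F j → j ∈ s) : rowSum (colDiagram F) t = #{j ∈ s | t ≤ colSum F j} := by
  simpa [colDiagram] using colSum_rowDiagram (F := transpose F) ht (by simpa using hs)

lemma SwitchFree.rowDiagram_colDiagram_subset {F : Finset (ℤ × ℤ)} (hF : SwitchFree F) :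
    rowDiagram (colDiagram F) ⊆ colDiagram (rowDiagram F) := by
  rintro ⟨t, k⟩ hp
  simp only [mem_rowDiagram, mem_colDiagram] at hp ⊢
  obtain ⟨j, hj⟩ := rowSum_pos_iff.1 (hp.1.trans_lt' zero_lt_one |>.trans_le hp.2)
  have ht : 1 ≤ t := (mem_colDiagram.1 hj).1
  refine ⟨ht, ?_⟩
  rw [colSum_rowDiagram hp.1 fun i => mem_image_fst_iff.2]
  rw [rowSum_colDiagram ht fun j => mem_image_snd_iff.2] at hp
  exact hF.le_card_filter_rowSum hp.1 hp.2

/-- `rowDiagram (colDiagram F)` is `F` with its columns sorted by length and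
`colDiagram (rowDiagram F)` is `F` with its rows sorted by length; for switch-free `F` these
Ferrers diagrams coincide. -/
lemma SwitchFree.rowDiagram_colDiagram {F : Finset (ℤ × ℤ)} (hF : SwitchFree F) :
    rowDiagram (colDiagram F) = colDiagram (rowDiagram F) := by
  refine hF.rowDiagram_colDiagram_subset.antisymm ?_
  simpa [colDiagram_transpose, rowDiagram_transpose] using
    hF.transpose.rowDiagram_colDiagram_subset

/-- The weight `2 r_i + 1 - 2 j` is positive exactly on the cells of a left-justified set. -/
lemma uniquelyDetermined_of_rowDiagram_eq {F : Finset (ℤ × ℤ)} (hF : rowDiagram F = F) :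
    uniquelyDetermined F := by
  refine uniquelyDetermined_of_weight (fun i => 2 * rowSum F i + 1) (fun j => -2 * j) ?_ ?_
  · intro p hp
    rw [← hF, mem_rowDiagram] at hp
    omega
  · intro p hp _ hc
    obtain ⟨i, hi⟩ := colSum_pos_iff.1 hc
    rw [← hF, mem_rowDiagram] at hp hi
    omega

def IsStair (F : Finset (ℤ × ℤ)) : Prop :=
  ∀ p ∈ F, 1 ≤ p.1 ∧ 1 ≤ p.2 ∧ ∀ i j, 1 ≤ i → i ≤ p.1 → 1 ≤ j → j ≤ p.2 → (i, j) ∈ F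

lemma IsStair.inter {X Y : Finset (ℤ × ℤ)} (hX : IsStair X) (hY : IsStair Y) :
    IsStair (X ∩ Y) := by
  intro p hp
  rw [mem_inter] at hp
  obtain ⟨h1, h2, hX⟩ := hX p hp.1
  obtain ⟨-, -, hY⟩ := hY p hp.2
  exact ⟨h1, h2, fun i j hi hip hj hjp =>
    mem_inter.2 ⟨hX i j hi hip hj hjp, hY i j hi hip hj hjp⟩⟩

lemma IsStair.transpose {F : Finset (ℤ × ℤ)} (hF : IsStair F) : IsStair (transpose F) := by
  intro p hp
  obtain ⟨h1, h2, hF⟩ := hF _ (mem_transpose.1 hp)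
  exact ⟨h2, h1, fun i j hi hip hj hjp => mem_transpose.2 (hF j i hj hjp hi hip)⟩

lemma IsStair.rowDiagram_eq {F : Finset (ℤ × ℤ)} (hF : IsStair F) : rowDiagram F = F := by
  ext ⟨i, t⟩
  simp only [mem_rowDiagram]
  constructor
  · rintro ⟨ht, htr⟩
    by_contra hit
    have hmaps : ∀ p ∈ F.filter (fun p => p.1 = i), p.2 ∈ Icc 1 (t - 1) := by
      intro p hp
      rw [mem_filter] at hp
      obtain ⟨hi, hj, hdown⟩ := hF p hp.1
      exact mem_Icc.2 ⟨hj, Int.le_sub_one_of_lt (not_le.1 fun htj =>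
        hit (hp.2 ▸ hdown p.1 t hi le_rfl ht htj))⟩
    have := card_le_card_of_injOn Prod.snd hmaps fun p hp q hq hpq =>
      Prod.ext ((mem_filter.1 hp).2.trans (mem_filter.1 hq).2.symm) hpq
    rw [Int.card_Icc] at this
    simp only [rowSum] at htr
    omega
  · intro hit
    obtain ⟨hi, ht, hdown⟩ := hF _ hit
    refine ⟨ht, ?_⟩
    have hmaps : ∀ j ∈ Icc 1 t, (i, j) ∈ F.filter (fun p => p.1 = i) := fun j hj =>
      mem_filter.2 ⟨hdown i j hi le_rfl (mem_Icc.1 hj).1 (mem_Icc.1 hj).2, rfl⟩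
    have := card_le_card_of_injOn (fun j => (i, j)) hmaps fun _ _ _ _ h => (Prod.mk.inj h).2
    rw [Int.card_Icc] at this
    simp only [rowSum]
    omega

lemma IsStair.colDiagram_eq {F : Finset (ℤ × ℤ)} (hF : IsStair F) : colDiagram F = F := by
  rw [colDiagram, hF.transpose.rowDiagram_eq, transpose_transpose]

lemma colDiagram_colDiagram (F : Finset (ℤ × ℤ)) : colDiagram (colDiagram F) = colDiagram F := by
  ext p
  simp [colSum_colDiagram]

lemma isStair_colDiagram {F : Finset (ℤ × ℤ)} (h0 : ∀ j < 1, colSum F j = 0)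
    (hmono : AntitoneOn (colSum F) (Set.Ici 1)) : IsStair (colDiagram F) := by
  rintro ⟨t, j⟩ hp
  rw [mem_colDiagram] at hp
  have hj : 1 ≤ j := by
    by_contra! hj
    have := h0 j hj
    simp only at hp
    omega
  refine ⟨hp.1, hj, fun i j' hi hit hj' hjj => mem_colDiagram.2 ⟨hi, ?_⟩⟩
  exact hit.trans (hp.2.trans (hmono (Set.mem_Ici.2 hj') (Set.mem_Ici.2 hj) hjj))

lemma isStair_rowDiagram {F : Finset (ℤ × ℤ)} (h0 : ∀ i < 1, rowSum F i = 0)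
    (hmono : AntitoneOn (rowSum F) (Set.Ici 1)) : IsStair (rowDiagram F) := by
  have := isStair_colDiagram (F := transpose F) (by simpa using h0)
    (by rwa [show colSum (transpose F) = rowSum F from funext (colSum_transpose F)])
  simpa [colDiagram_transpose] using this.transpose

lemma SwitchFree.isStair {F : Finset (ℤ × ℤ)} (hF : SwitchFree F)
    (hr0 : ∀ i < 1, rowSum F i = 0) (hc0 : ∀ j < 1, colSum F j = 0)
    (hr : AntitoneOn (rowSum F) (Set.Ici 1)) (hc : AntitoneOn (colSum F) (Set.Ici 1)) :
    IsStair F := by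
  rintro ⟨i, j⟩ hp
  have hi : 1 ≤ i := by
    by_contra! hi
    exact (rowSum_pos_iff.2 ⟨j, hp⟩).ne' (hr0 i hi)
  have hj : 1 ≤ j := by
    by_contra! hj
    exact (colSum_pos_iff.2 ⟨i, hp⟩).ne' (hc0 j hj)
  refine ⟨hi, hj, fun i' j' hi' hii hj' hjj => ?_⟩
  exact hF.mem_of_rowSum_le (hr (Set.mem_Ici.2 hi') (Set.mem_Ici.2 hi) hii)
    (hF.mem_of_colSum_le (hc (Set.mem_Ici.2 hj') (Set.mem_Ici.2 hj) hjj) hp)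

lemma sandwich_iff_colSum {X Y Z : Finset (ℤ × ℤ)} (hX : colDiagram X = X)
    (hY : colDiagram Y = Y) (hZ : colDiagram Z = Z) :
    X ∩ Y ⊆ Z ∧ Z ⊆ X ∪ Y ↔
      ∀ j, min (colSum X j) (colSum Y j) ≤ colSum Z j ∧
        colSum Z j ≤ max (colSum X j) (colSum Y j) := by
  have mem : ∀ {W : Finset (ℤ × ℤ)}, colDiagram W = W → ∀ i j,
      (i, j) ∈ W ↔ 1 ≤ i ∧ i ≤ colSum W j := fun hW i j => by
    nth_rw 1 [← hW]
    exact mem_colDiagram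
  simp only [subset_iff, Prod.forall, mem_inter, mem_union, mem hX, mem hY, mem hZ]
  constructor
  · rintro ⟨h1, h2⟩ j
    have := h1 (colSum Z j + 1) j
    have := h2 (colSum Z j) j
    have := colSum_nonneg X j
    have := colSum_nonneg Y j
    have := colSum_nonneg Z j
    omega
  · intro h
    constructor <;> intro i j <;> have := h j <;> omega

section Minimum

variable {G : Finset (ℤ × ℤ)}

lemma card_symmDiff_le_lineDiff (hC : IsStair (colDiagram G)) (hR : IsStair (rowDiagram G))
    {F : Finset (ℤ × ℤ)} (hF : SwitchFree F) :
    (#(colDiagram G ∆ rowDiagram G) : ℤ) ≤ lineDiff G F := by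
  set S := rowDiagram (colDiagram F)
  have hCS : #(colDiagram G ∆ S) ≤ #(colDiagram G ∆ colDiagram F) := by
    simpa [hC.rowDiagram_eq] using card_symmDiff_rowDiagram_le (colDiagram G) (colDiagram F)
  have hRS : #(rowDiagram G ∆ S) ≤ #(rowDiagram G ∆ rowDiagram F) := by
    simpa [S, hR.colDiagram_eq, hF.rowDiagram_colDiagram] using
      card_symmDiff_colDiagram_le (rowDiagram G) (rowDiagram F)
  have := card_symmDiff_triangle S (colDiagram G) (rowDiagram G)
  rw [lineDiff_eq, symmDiff_comm S, symmDiff_comm S] at *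
  omega

lemma IsStair.lineDiff_eq {F : Finset (ℤ × ℤ)} (hF : IsStair F) (G : Finset (ℤ × ℤ)) :
    lineDiff G F = #(F ∆ colDiagram G) + #(F ∆ rowDiagram G) := by
  rw [_root_.lineDiff_eq, hF.colDiagram_eq, hF.rowDiagram_eq, symmDiff_comm (colDiagram G),
    symmDiff_comm (rowDiagram G)]

lemma IsStair.lineDiff_eq_iff {F : Finset (ℤ × ℤ)} (hF : IsStair F) :
    lineDiff G F = #(colDiagram G ∆ rowDiagram G) ↔
      colDiagram G ∩ rowDiagram G ⊆ F ∧ F ⊆ colDiagram G ∪ rowDiagram G := by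
  rw [hF.lineDiff_eq, ← card_symmDiff_add_card_symmDiff_eq_iff]
  norm_cast

lemma isLeast_alpha (hC : IsStair (colDiagram G)) (hR : IsStair (rowDiagram G)) :
    IsLeast {x | ∃ F, uniquelyDetermined F ∧ alpha G F = x}
      ((#(colDiagram G ∆ rowDiagram G) : ℝ) / 2) := by
  have hmin := hC.inter hR
  refine ⟨⟨_, uniquelyDetermined_of_rowDiagram_eq hmin.rowDiagram_eq, ?_⟩, ?_⟩
  · rw [alpha, hmin.lineDiff_eq_iff.2 ⟨subset_rfl, inter_subset_left.trans subset_union_left⟩]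
    push_cast
    rfl
  · rintro x ⟨F, hF, rfl⟩
    rw [alpha]
    gcongr
    exact_mod_cast card_symmDiff_le_lineDiff hC hR hF.switchFree

lemma alpha_eq_sInf_iff (hC : IsStair (colDiagram G)) (hR : IsStair (rowDiagram G))
    {F : Finset (ℤ × ℤ)} (hF : IsStair F) :
    alpha G F = sInf {x | ∃ F', uniquelyDetermined F' ∧ alpha G F' = x} ↔
      colDiagram G ∩ rowDiagram G ⊆ F ∧ F ⊆ colDiagram G ∪ rowDiagram G := by
  rw [(isLeast_alpha hC hR).csInf_eq, ← hF.lineDiff_eq_iff, alpha,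
    div_left_inj' two_ne_zero]
  exact_mod_cast Iff.rfl

end Minimum

lemma antitoneOn_of_nat {f : ℤ → ℤ} {g : ℕ → ℤ} (hfg : ∀ i : ℕ, 1 ≤ i → f i = g i)
    (hg : ∀ i i' : ℕ, 1 ≤ i → i ≤ i' → g i' ≤ g i) : AntitoneOn f (Set.Ici 1) := by
  intro i hi i' hi' hii
  rw [Set.mem_Ici] at hi hi'
  lift i to ℕ using by omega
  lift i' to ℕ using by omega
  rw [hfg i (by omega), hfg i' (by omega)]
  exact hg i i' (by omega) (by omega)

lemma antitoneOn_of_nat_of_le {f : ℤ → ℤ} {g : ℕ → ℤ} {n : ℕ} (hf : ∀ i, 0 ≤ f i)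
    (hfg : ∀ i : ℕ, 1 ≤ i → i ≤ n → f i = g i) (hf0 : ∀ i : ℤ, i < 1 ∨ n < i → f i = 0)
    (hg : ∀ i i' : ℕ, 1 ≤ i → i ≤ i' → i' ≤ n → g i' ≤ g i) : AntitoneOn f (Set.Ici 1) := by
  refine antitoneOn_of_nat (g := fun i => f i) (fun _ _ => rfl) fun i i' hi hii => ?_
  rcases le_or_gt i' n with hi'n | hi'n
  · rw [hfg i hi (hii.trans hi'n), hfg i' (hi.trans hii) hi'n]
    exact hg i i' hi hii hi'n
  · rw [hf0 i' (.inr (by exact_mod_cast hi'n))]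
    exact hf i

lemma forall_between_iff_nat {X Y Z : ℤ → ℤ} {x y z : ℕ → ℤ} {n : ℕ}
    (hX : ∀ j : ℕ, 1 ≤ j → j ≤ n → X j = x j) (hY : ∀ j : ℕ, 1 ≤ j → j ≤ n → Y j = y j)
    (hZ : ∀ j : ℕ, 1 ≤ j → Z j = z j) (hX0 : ∀ j : ℤ, j < 1 ∨ n < j → X j = 0)
    (hY0 : ∀ j : ℤ, j < 1 ∨ n < j → Y j = 0) (hZ0 : ∀ j : ℤ, j < 1 → Z j = 0) :
    (∀ j, min (X j) (Y j) ≤ Z j ∧ Z j ≤ max (X j) (Y j)) ↔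
      ∀ j : ℕ, 1 ≤ j → (j ≤ n → min (x j) (y j) ≤ z j ∧ z j ≤ max (x j) (y j)) ∧
        (n < j → z j = 0) := by
  constructor
  · intro h j hj
    refine ⟨fun hjn => ?_, fun hjn => ?_⟩
    · simpa [hX j hj hjn, hY j hj hjn, hZ j hj] using h j
    · have hjn : (n : ℤ) < j := by exact_mod_cast hjn
      have := h j
      rw [hX0 j (.inr hjn), hY0 j (.inr hjn), hZ j hj] at this
      simp only [min_self, max_self] at this
      omega
  · intro h j
    rcases lt_or_ge j 1 with hj | hj
    · simp [hX0 j (.inl hj), hY0 j (.inl hj), hZ0 j hj]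
    lift j to ℕ using by omega
    have hj : 1 ≤ j := by exact_mod_cast hj
    rcases le_or_gt j n with hjn | hjn
    · rw [hX j hj hjn, hY j hj hjn, hZ j hj]
      exact (h j hj).1 hjn
    · rw [hX0 j (.inr (by exact_mod_cast hjn)), hY0 j (.inr (by exact_mod_cast hjn)), hZ j hj,
        (h j hj).2 hjn]
      simp

lemma rowSum_le_of_colSum_eq_zero {G : Finset (ℤ × ℤ)} {n : ℕ}
    (h : ∀ j : ℤ, j < 1 ∨ n < j → colSum G j = 0) (i : ℤ) : rowSum G i ≤ n := by
  have hmaps : ∀ p ∈ G.filter (fun p => p.1 = i), p.2 ∈ Icc 1 (n : ℤ) := by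
    intro p hp
    have hc := colSum_pos_iff.2 ⟨p.1, (mem_filter.1 hp).1⟩
    rw [mem_Icc]
    by_contra hp
    exact hc.ne' (h p.2 (by omega))
  have := card_le_card_of_injOn Prod.snd hmaps fun p hp q hq hpq =>
    Prod.ext ((mem_filter.1 hp).2.trans (mem_filter.1 hq).2.symm) hpq
  rw [Int.card_Icc] at this
  simp only [rowSum]
  omega

lemma colSum_rowDiagram_eq_zero {G : Finset (ℤ × ℤ)} {n : ℕ}
    (h : ∀ j : ℤ, j < 1 ∨ n < j → colSum G j = 0) {t : ℤ} (ht : t < 1 ∨ n < t) :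
    colSum (rowDiagram G) t = 0 := by
  refine ((colSum_nonneg _ _).eq_or_lt.resolve_right fun hpos => ?_).symm
  obtain ⟨i, hi⟩ := colSum_pos_iff.1 hpos
  have := rowSum_le_of_colSum_eq_zero h i
  simp only [mem_rowDiagram] at hi
  omega

lemma colSum_rowDiagram_eq_card {G : Finset (ℤ × ℤ)} {m : ℕ} {r : ℕ → ℤ}
    (hr_eq : ∀ i : ℕ, 1 ≤ i → i ≤ m → rowSum G i = r i)
    (hr_zero : ∀ i : ℤ, i < 1 ∨ (m : ℤ) < i → rowSum G i = 0) {j : ℕ} (hj : 1 ≤ j) :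
    colSum (rowDiagram G) j = #{i ∈ Icc 1 m | (j : ℤ) ≤ r i} := by
  have hs : ∀ i, 0 < rowSum G i → i ∈ (Icc 1 m).map Nat.castEmbedding := by
    intro i hi
    have : 1 ≤ i ∧ i ≤ m := by
      by_contra h'
      exact hi.ne' (hr_zero i (by omega))
    lift i to ℕ using by omega
    exact mem_map_of_mem _ (mem_Icc.2 (by exact_mod_cast this))
  rw [colSum_rowDiagram (by exact_mod_cast hj) hs, filter_map, card_map]
  congr 2
  refine filter_congr fun i hi => ?_
  rw [mem_Icc] at hi
  simp [hr_eq i hi.1 hi.2]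

lemma sandwich_iff_of_lineSums (G F : Finset (ℤ × ℤ)) (m n : ℕ) (r c v : ℕ → ℤ) (a : ℕ → ℕ)
    (hr_eq : ∀ i : ℕ, 1 ≤ i → i ≤ m → rowSum G (i : ℤ) = r i)
    (hr_zero : ∀ i : ℤ, i < 1 ∨ (m : ℤ) < i → rowSum G i = 0)
    (hc_eq : ∀ j : ℕ, 1 ≤ j → j ≤ n → colSum G (j : ℤ) = c j)
    (hc_zero : ∀ j : ℤ, j < 1 ∨ (n : ℤ) < j → colSum G j = 0)
    (ha : ∀ j : ℕ, a j = ((Finset.Icc 1 m).filter fun i => (j : ℤ) ≤ r i).card)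
    (hv_eq : ∀ j : ℕ, 1 ≤ j → colSum F (j : ℤ) = v j)
    (hv_zero : ∀ j : ℤ, j < 1 → colSum F j = 0)
    (hR : colDiagram (rowDiagram G) = rowDiagram G) (hF : colDiagram F = F) :
    (colDiagram G ∩ rowDiagram G ⊆ F ∧ F ⊆ colDiagram G ∪ rowDiagram G) ↔
      ∀ j : ℕ, 1 ≤ j →
        (j ≤ n → min ((a j : ℤ)) (c j) ≤ v j ∧ v j ≤ max ((a j : ℤ)) (c j)) ∧
        (n < j → v j = 0) := by
  rw [inter_comm, union_comm, sandwich_iff_colSum hR (colDiagram_colDiagram G) hF]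
  simp only [colSum_colDiagram]
  refine forall_between_iff_nat (fun j hj _ => ?_) hc_eq hv_eq
    (fun _ => colSum_rowDiagram_eq_zero hc_zero) hc_zero hv_zero
  rw [colSum_rowDiagram_eq_card hr_eq hr_zero hj, ha]

theorem closest_unique_sets_general (F2 F1 : Finset (ℤ × ℤ)) (m n : ℕ) (r c u v : ℕ → ℤ)
    -- `F2` has non-zero row sums `r_1 ≥ … ≥ r_m` in rows `1, …, m`, zero elsewhere
    (hr_eq : ∀ i : ℕ, 1 ≤ i → i ≤ m → rowSum F2 (i : ℤ) = r i)
    (hr_zero : ∀ i : ℤ, i < 1 ∨ (m : ℤ) < i → rowSum F2 i = 0)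
    (hr_mono : ∀ i i' : ℕ, 1 ≤ i → i ≤ i' → i' ≤ m → r i' ≤ r i)
    -- `F2` has non-zero column sums `c_1 ≥ … ≥ c_n` in columns `1, …, n`, zero elsewhere
    (hc_eq : ∀ j : ℕ, 1 ≤ j → j ≤ n → colSum F2 (j : ℤ) = c j)
    (hc_zero : ∀ j : ℤ, j < 1 ∨ (n : ℤ) < j → colSum F2 j = 0)
    (hc_mono : ∀ j j' : ℕ, 1 ≤ j → j ≤ j' → j' ≤ n → c j' ≤ c j)
    -- `a_j = #{i : r_i ≥ j}` and `b_i = #{j : c_j ≥ i}`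
    (a b : ℕ → ℕ)
    (ha : ∀ j : ℕ, a j = ((Finset.Icc 1 m).filter fun i => (j : ℤ) ≤ r i).card)
    (hb : ∀ i : ℕ, b i = ((Finset.Icc 1 n).filter fun j => (i : ℤ) ≤ c j).card)
    -- `α_0` is the minimum of `α(F2, F)` over all uniquely determined `F`
    (α0 : ℝ)
    (hα0 : α0 = sInf {x : ℝ | ∃ F : Finset (ℤ × ℤ), uniquelyDetermined F ∧ alpha F2 F = x})
    -- `F1` is uniquely determined with row sums `u_1 ≥ u_2 ≥ …` in rows `1, 2, …`
    -- (zero elsewhere) and column sums `v_1 ≥ v_2 ≥ …` in columns `1, 2, …` (zero elsewhere)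
    (hF1 : uniquelyDetermined F1)
    (hu_eq : ∀ i : ℕ, 1 ≤ i → rowSum F1 (i : ℤ) = u i)
    (hu_zero : ∀ i : ℤ, i < 1 → rowSum F1 i = 0)
    (hu_mono : ∀ i i' : ℕ, 1 ≤ i → i ≤ i' → u i' ≤ u i)
    (hv_eq : ∀ j : ℕ, 1 ≤ j → colSum F1 (j : ℤ) = v j)
    (hv_zero : ∀ j : ℤ, j < 1 → colSum F1 j = 0)
    (hv_mono : ∀ j j' : ℕ, 1 ≤ j → j ≤ j' → v j' ≤ v j) :
    -- (i) ↔ (ii)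
    ((alpha F2 F1 = α0) ↔
      (∀ j : ℕ, 1 ≤ j →
        (j ≤ n → min ((a j : ℤ)) (c j) ≤ v j ∧ v j ≤ max ((a j : ℤ)) (c j)) ∧
        (n < j → v j = 0))) ∧
    -- (i) ↔ (iii)
    ((alpha F2 F1 = α0) ↔
      (∀ i : ℕ, 1 ≤ i →
        (i ≤ m → min ((b i : ℤ)) (r i) ≤ u i ∧ u i ≤ max ((b i : ℤ)) (r i)) ∧
        (m < i → u i = 0))) := by
  have hC : IsStair (colDiagram F2) := isStair_colDiagram (fun j hj => hc_zero j (.inl hj))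
    (antitoneOn_of_nat_of_le (colSum_nonneg F2) hc_eq hc_zero hc_mono)
  have hR : IsStair (rowDiagram F2) := isStair_rowDiagram (fun i hi => hr_zero i (.inl hi))
    (antitoneOn_of_nat_of_le (rowSum_nonneg F2) hr_eq hr_zero hr_mono)
  have hF1s : IsStair F1 := hF1.switchFree.isStair hu_zero hv_zero
    (antitoneOn_of_nat hu_eq hu_mono) (antitoneOn_of_nat hv_eq hv_mono)
  rw [hα0, alpha_eq_sInf_iff hC hR hF1s]
  refine ⟨sandwich_iff_of_lineSums F2 F1 m n r c v a hr_eq hr_zero hc_eq hc_zero ha hv_eq hv_zero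
    hR.colDiagram_eq hF1s.colDiagram_eq, ?_⟩
  have := sandwich_iff_of_lineSums (transpose F2) (transpose F1) n m c r u b
    (by simpa using hc_eq) (by simpa using hc_zero) (by simpa using hr_eq) (by simpa using hr_zero)
    hb (by simpa using hu_eq) (by simpa using hu_zero)
    (by rw [rowDiagram_transpose]; exact hC.transpose.colDiagram_eq) hF1s.transpose.colDiagram_eq
  rwa [colDiagram_transpose, rowDiagram_transpose, ← transpose_inter, ← transpose_union,
    transpose_subset_transpose, transpose_subset_transpose, inter_comm, union_comm] at this

/-- Characterisation of the uniquely determined sets `F1` minimising `α(F2, F1)`,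
in terms of the (ordered) line sums of `F2`. -/
theorem closest_unique_sets (F2 F1 : Finset (ℤ × ℤ)) (m n : ℕ) (r c u v : ℕ → ℤ)
    -- `F2` has non-zero row sums `r_1 ≥ … ≥ r_m` in rows `1, …, m`, zero elsewhere
    (hr_eq : ∀ i : ℕ, 1 ≤ i → i ≤ m → rowSum F2 (i : ℤ) = r i)
    (hr_zero : ∀ i : ℤ, i < 1 ∨ (m : ℤ) < i → rowSum F2 i = 0)
    (hr_pos : ∀ i : ℕ, 1 ≤ i → i ≤ m → 0 < r i)
    (hr_mono : ∀ i i' : ℕ, 1 ≤ i → i ≤ i' → i' ≤ m → r i' ≤ r i)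
    -- `F2` has non-zero column sums `c_1 ≥ … ≥ c_n` in columns `1, …, n`, zero elsewhere
    (hc_eq : ∀ j : ℕ, 1 ≤ j → j ≤ n → colSum F2 (j : ℤ) = c j)
    (hc_zero : ∀ j : ℤ, j < 1 ∨ (n : ℤ) < j → colSum F2 j = 0)
    (hc_pos : ∀ j : ℕ, 1 ≤ j → j ≤ n → 0 < c j)
    (hc_mono : ∀ j j' : ℕ, 1 ≤ j → j ≤ j' → j' ≤ n → c j' ≤ c j)
    -- `a_j = #{i : r_i ≥ j}` and `b_i = #{j : c_j ≥ i}`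
    (a b : ℕ → ℕ)
    (ha : ∀ j : ℕ, a j = ((Finset.Icc 1 m).filter fun i => (j : ℤ) ≤ r i).card)
    (hb : ∀ i : ℕ, b i = ((Finset.Icc 1 n).filter fun j => (i : ℤ) ≤ c j).card)
    -- `α_0` is the minimum of `α(F2, F)` over all uniquely determined `F`
    (α0 : ℝ)
    (hα0 : α0 = sInf {x : ℝ | ∃ F : Finset (ℤ × ℤ), uniquelyDetermined F ∧ alpha F2 F = x})
    -- `F1` is uniquely determined with row sums `u_1 ≥ u_2 ≥ …` in rows `1, 2, …`
    -- (zero elsewhere) and column sums `v_1 ≥ v_2 ≥ …` in columns `1, 2, …` (zero elsewhere)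
    (hF1 : uniquelyDetermined F1)
    (hu_eq : ∀ i : ℕ, 1 ≤ i → rowSum F1 (i : ℤ) = u i)
    (hu_zero : ∀ i : ℤ, i < 1 → rowSum F1 i = 0)
    (hu_mono : ∀ i i' : ℕ, 1 ≤ i → i ≤ i' → u i' ≤ u i)
    (hv_eq : ∀ j : ℕ, 1 ≤ j → colSum F1 (j : ℤ) = v j)
    (hv_zero : ∀ j : ℤ, j < 1 → colSum F1 j = 0)
    (hv_mono : ∀ j j' : ℕ, 1 ≤ j → j ≤ j' → v j' ≤ v j) :
    -- (i) ↔ (ii)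
    ((alpha F2 F1 = α0) ↔
      (∀ j : ℕ, 1 ≤ j →
        (j ≤ n → min ((a j : ℤ)) (c j) ≤ v j ∧ v j ≤ max ((a j : ℤ)) (c j)) ∧
        (n < j → v j = 0))) ∧
    -- (i) ↔ (iii)
    ((alpha F2 F1 = α0) ↔
      (∀ i : ℕ, 1 ≤ i →
        (i ≤ m → min ((b i : ℤ)) (r i) ≤ u i ∧ u i ≤ max ((b i : ℤ)) (r i)) ∧
        (m < i → u i = 0))) :=
  closest_unique_sets_general F2 F1 m n r c u v hr_eq hr_zero hr_mono hc_eq hc_zero hc_mono a b ha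
    hb α0 hα0 hF1 hu_eq hu_zero hu_mono hv_eq hv_zero hv_mono
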